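/- Let C_a, C_t, N_a, s be positive reals and J ≥ 2 a natural number. If C_a > C_t and (C_t/C_a)^{1/(2(J−1))} ≤ x < 1, then for every integer l with 1 ≤ l ≤ J one has γ_x(l) ≤ γ_x(1) (Proposition 1, Case III, second subcase: the optimal active-IRS index is l = 1). -/
import Mathlib


open Real

/-- Received SNR in the multi-IRS WIT system, as a function of the AIRS index `l`:
`γ_x(l) = C_a·C_t·N_a·x^{2(J−1)} / (s·C_a·x^{2(J−l)} + s·C_t·x^{2(l−1)} + s²)`. -/
noncomputable def snr (Ca Ct Na s : ℝ) (J : ℕ) (x l : ℝ) : ℝ :=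
  Ca * Ct * Na * x ^ (2 * ((J : ℝ) - 1)) /
    (s * Ca * x ^ (2 * ((J : ℝ) - l)) + s * Ct * x ^ (2 * (l - 1)) + s ^ 2)

/-- Proposition 1, Case III, second subcase: if `C_a > C_t` and
`(C_t/C_a)^{1/(2(J−1))} ≤ x < 1`, then among integer AIRS locations `1 ≤ l ≤ J`,
the location `l = 1` maximizes the received SNR. -/
theorem stmt_6 (Ca Ct Na s : ℝ) (hCa : 0 < Ca) (hCt : 0 < Ct) (hNa : 0 < Na) (hs : 0 < s)
    (J : ℕ) (hJ : 2 ≤ J) (x : ℝ)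
    (hCaCt : Ct < Ca)
    (hxlb : (Ct / Ca) ^ (1 / (2 * ((J : ℝ) - 1))) ≤ x) (hx1 : x < 1) :
    ∀ l : ℤ, 1 ≤ l → l ≤ (J : ℤ) →
      snr Ca Ct Na s J x (l : ℝ) ≤ snr Ca Ct Na s J x (1 : ℝ) := by
  intro l hl1 hlJ
  have hx0 : 0 < x := lt_of_lt_of_le (rpow_pos_of_pos (div_pos hCt hCa) _) hxlb
  have hJ1 : (2:ℝ) ≤ (J:ℝ) := by exact_mod_cast hJ
  have he : (0:ℝ) < 2 * ((J:ℝ) - 1) := by linarith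
  have hl1' : (1:ℝ) ≤ (l:ℝ) := by exact_mod_cast hl1
  have hlJ' : (l:ℝ) ≤ (J:ℝ) := by exact_mod_cast hlJ
  set a := 2 * ((J:ℝ) - (l:ℝ)) with ha
  set b := 2 * ((l:ℝ) - 1) with hb
  have hab : a + b = 2 * ((J:ℝ) - 1) := by ring
  have ha0 : 0 ≤ a := by simp [ha]; linarith
  have hb0 : 0 ≤ b := by simp [hb]; linarith
  -- x^{2(J-1)} ≥ Ct/Ca
  have h1 : Ct / Ca ≤ x ^ (2 * ((J:ℝ) - 1)) := by
    have := rpow_le_rpow (le_of_lt (rpow_pos_of_pos (div_pos hCt hCa) _)) hxlb he.le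
    rwa [← rpow_mul (div_pos hCt hCa).le, one_div_mul_cancel he.ne',
      rpow_one] at this
    -- the rpow_natCast rewrite may be unnecessary; fix if errors
  -- x^{2(J-1)} ≤ x^a
  have h2 : x ^ (2 * ((J:ℝ) - 1)) ≤ x ^ a :=
    rpow_le_rpow_of_exponent_ge hx0 hx1.le (by linarith)
  have hkey : Ct ≤ Ca * x ^ a := by
    have := (div_le_iff₀ hCa).mp (h1.trans h2)
    linarith
  have hbl1 : x ^ b ≤ 1 := rpow_le_one hx0.le hx1.le hb0
  have hxa0 : (0:ℝ) ≤ x ^ a := (rpow_pos_of_pos hx0 _).le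
  have hxb0 : (0:ℝ) ≤ x ^ b := (rpow_pos_of_pos hx0 _).le
  have hsplit : x ^ (2 * ((J:ℝ) - 1)) = x ^ a * x ^ b := by
    rw [← rpow_add hx0, hab]
  have hden : s * Ca * x ^ (2 * ((J:ℝ) - 1)) + s * Ct * x ^ (2 * ((1:ℝ) - 1)) + s ^ 2
      ≤ s * Ca * x ^ a + s * Ct * x ^ b + s ^ 2 := by
    have h0 : (2 : ℝ) * ((1:ℝ) - 1) = 0 := by ring
    rw [h0, rpow_zero, hsplit]
    nlinarith [mul_nonneg hs.le (mul_nonneg (sub_nonneg.2 hbl1) (sub_nonneg.2 hkey))]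
  have hDpos : 0 < s * Ca * x ^ (2 * ((J:ℝ) - 1)) + s * Ct * x ^ (2 * ((1:ℝ) - 1)) + s ^ 2 := by
    have := rpow_pos_of_pos hx0 (2 * ((J:ℝ) - 1))
    have := rpow_pos_of_pos hx0 (2 * ((1:ℝ) - 1))
    positivity
  have hNpos : 0 ≤ Ca * Ct * Na * x ^ (2 * ((J:ℝ) - 1)) := by
    have := rpow_pos_of_pos hx0 (2 * ((J:ℝ) - 1))
    positivity
  unfold snr
  exact div_le_div_of_nonneg_left hNpos hDpos hden
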